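/- arXiv:1103.2427 — 2 statements merged into one kernel-verified Lean document; each statement's English description precedes it below -/
import Mathlib

section
/- For every c ≥ 3 with c ≡ 3 (mod 4) and every odd k ≥ 3, γ(P(ck,k)) ≤ ⌊ck/2⌋ + ⌊k/4⌋ + 1. -/
open SimpleGraph

/-- The generalized Petersen graph P(n,k): outer vertices `Sum.inl i`,
inner vertices `Sum.inr i`, indices in `ZMod n`. -/
def petersen (n k : ℕ) : SimpleGraph (ZMod n ⊕ ZMod n) :=
  SimpleGraph.fromRel (fun a b =>
    match a, b with
    | Sum.inl i, Sum.inl j => j = i + 1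
    | Sum.inl i, Sum.inr j => j = i
    | Sum.inr i, Sum.inr j => j = i + (k : ZMod n)
    | _, _ => False)

/-- S is a dominating set: N[S] = V. -/
def IsDominating {V : Type*} (G : SimpleGraph V) (S : Set V) : Prop :=
  ∀ v, v ∈ S ∨ ∃ u ∈ S, G.Adj u v

/-- The domination number: minimum cardinality of a (finite) dominating set. -/
noncomputable def gamma {V : Type*} (G : SimpleGraph V) : ℕ :=
  sInf {m | ∃ S : Finset V, IsDominating G ↑S ∧ S.card = m}

/-!
Write `n = ck`; since `c ≡ 3 (mod 4)` and `k` is odd, `n ≡ 3k (mod 4)` is odd. Taking the outer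
vertices `≡ 0` and the inner vertices `≡ 2 (mod 4)` (about `n/2` vertices) dominates every vertex
except the inner vertices `i ≡ k (mod 4)` whose neighbour `i + k` wraps around the cycle, and those
are dominated by the at most `⌊k/4⌋ + 1` inner vertices below `k` that are `≡ k + 2 (mod 4)`,
since `i + k - n ≡ 2k - 3k ≡ k + 2`.
-/

open Finset

lemma gamma_le_card {V : Type*} {G : SimpleGraph V} {S : Finset V} (h : IsDominating G ↑S) :
    gamma G ≤ #S :=
  Nat.sInf_le ⟨S, h, rfl⟩

lemma card_filter_range_eq_of_succ {p : ℕ → Prop} [DecidablePred p] {f : ℕ → ℕ} (h0 : f 0 = 0)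
    (hs : ∀ m, f (m + 1) = f m + if p m then 1 else 0) (n : ℕ) :
    #{i ∈ range n | p i} = f n := by
  rw [← Nat.count_eq_card_filter_range]
  induction n with
  | zero => simp [h0]
  | succ m ih => rw [Nat.count_succ, ih, hs]

lemma card_filter_zmod_val (n : ℕ) [NeZero n] (p : ℕ → Prop) [DecidablePred p] :
    #{x : ZMod n | p x.val} = #{i ∈ range n | p i} := by
  refine card_nbij' ZMod.val Nat.cast ?_ ?_ ?_ ?_
  · intro x hx
    simpa [ZMod.val_lt x] using hx
  · intro i hi
    simp only [coe_filter, mem_range, Set.mem_ofPred_eq] at hi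
    simpa [ZMod.val_cast_of_lt hi.1] using hi.2
  · intro x _
    exact ZMod.natCast_zmod_val x
  · intro i hi
    simp only [coe_filter, mem_range, Set.mem_ofPred_eq] at hi
    exact ZMod.val_cast_of_lt hi.1

lemma adj_of_add_eq_or_add_eq {α V : Type*} [Add α] {G : SimpleGraph V} {f : α → V} {d : α}
    (hG : ∀ a, G.Adj (f a) (f (a + d))) {a b : α} (h : a + d = b ∨ b + d = a) :
    G.Adj (f a) (f b) := by
  rcases h with rfl | rfl
  · exact hG a
  · exact (hG b).symm

lemma ZMod.natCast_add_eq_of_eq_or {n i j d : ℕ} (h : j + d = i ∨ j + d = i + n) :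
    (j : ZMod n) + d = i := by
  rcases h with h | h
  · rw [← Nat.cast_add, h]
  · rw [← Nat.cast_add, h, Nat.cast_add, ZMod.natCast_self, add_zero]

/-- `P` holds `d` steps before or after `i` on `ℤ/n`, with the wrap-arounds made explicit on
representatives in `[0, n)` so that each case is plain `ℕ` arithmetic, decidable by `omega`. -/
inductive CycNbr (n d : ℕ) (P : ℕ → Prop) (i : ℕ) : Prop
  | sub : d ≤ i → P (i - d) → CycNbr n d P i
  | sub_wrap : i < d → P (i + n - d) → CycNbr n d P i
  | add : i + d < n → P (i + d) → CycNbr n d P i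
  | add_wrap : n ≤ i + d → P (i + d - n) → CycNbr n d P i

lemma CycNbr.exists_zmod {n d i : ℕ} {P : ℕ → Prop} (hd : d ≤ n) (hi : i < n)
    (h : CycNbr n d P i) : ∃ j : ZMod n, P j.val ∧ (j + d = i ∨ (i : ZMod n) + d = j) := by
  rcases h with ⟨h, hp⟩ | ⟨h, hp⟩ | ⟨h, hp⟩ | ⟨h, hp⟩
  · exact ⟨(i - d : ℕ), by rwa [ZMod.val_cast_of_lt (by omega)],
      .inl (ZMod.natCast_add_eq_of_eq_or (by omega))⟩
  · exact ⟨(i + n - d : ℕ), by rwa [ZMod.val_cast_of_lt (by omega)],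
      .inl (ZMod.natCast_add_eq_of_eq_or (by omega))⟩
  · exact ⟨(i + d : ℕ), by rwa [ZMod.val_cast_of_lt (by omega)],
      .inr (ZMod.natCast_add_eq_of_eq_or (by omega))⟩
  · exact ⟨(i + d - n : ℕ), by rwa [ZMod.val_cast_of_lt (by omega)],
      .inr (ZMod.natCast_add_eq_of_eq_or (by omega))⟩

namespace Petersen

variable {n k : ℕ}

lemma adj_inl_add_one (hn : 1 < n) (i : ZMod n) :
    (petersen n k).Adj (.inl i) (.inl (i + 1)) := by
  have : Fact (1 < n) := ⟨hn⟩
  refine (fromRel_adj _ _ _).2 ⟨fun h => ?_, .inl rfl⟩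
  exact one_ne_zero (left_eq_add.mp (Sum.inl.inj h))

lemma adj_inl_inr (i : ZMod n) : (petersen n k).Adj (.inl i) (.inr i) :=
  (fromRel_adj _ _ _).2 ⟨Sum.inl_ne_inr, .inl rfl⟩

lemma adj_inr_add (hk : (k : ZMod n) ≠ 0) (i : ZMod n) :
    (petersen n k).Adj (.inr i) (.inr (i + k)) :=
  (fromRel_adj _ _ _).2 ⟨fun h => hk (left_eq_add.mp (Sum.inr.inj h)), .inl rfl⟩

section VertexSet

def vertexSet (n : ℕ) [NeZero n] (P Q : ℕ → Prop) [DecidablePred P] [DecidablePred Q] :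
    Finset (ZMod n ⊕ ZMod n) :=
  disjSum {x : ZMod n | P x.val} {x : ZMod n | Q x.val}

variable [NeZero n] {P Q : ℕ → Prop} [DecidablePred P] [DecidablePred Q]

lemma card_vertexSet : #(vertexSet n P Q) = #{i ∈ range n | P i} + #{i ∈ range n | Q i} := by
  rw [vertexSet, card_disjSum, card_filter_zmod_val, card_filter_zmod_val]

lemma isDominating_vertexSet (hk0 : 0 < k) (hkn : k < n)
    (hout : ∀ i < n, P i ∨ Q i ∨ CycNbr n 1 P i) (hin : ∀ i < n, Q i ∨ P i ∨ CycNbr n k Q i) :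
    IsDominating (petersen n k) ↑(vertexSet n P Q) := by
  have hk : (k : ZMod n) ≠ 0 := by
    rw [Ne, ZMod.natCast_eq_zero_iff]
    exact Nat.not_dvd_of_pos_of_lt hk0 hkn
  rintro (x | x)
  · rcases hout x.val x.val_lt with hP | hQ | hN
    · exact .inl (by simpa [vertexSet] using hP)
    · exact .inr ⟨.inr x, by simpa [vertexSet] using hQ, (adj_inl_inr x).symm⟩
    · obtain ⟨j, hj, hjx⟩ := hN.exists_zmod (by omega) x.val_lt
      rw [ZMod.natCast_zmod_val, Nat.cast_one] at hjx
      exact .inr ⟨.inl j, by simpa [vertexSet] using hj,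
        adj_of_add_eq_or_add_eq (f := Sum.inl) (adj_inl_add_one (by omega)) hjx⟩
  · rcases hin x.val x.val_lt with hQ | hP | hN
    · exact .inl (by simpa [vertexSet] using hQ)
    · exact .inr ⟨.inl x, by simpa [vertexSet] using hP, adj_inl_inr x⟩
    · obtain ⟨j, hj, hjx⟩ := hN.exists_zmod hkn.le x.val_lt
      rw [ZMod.natCast_zmod_val] at hjx
      exact .inr ⟨.inr j, by simpa [vertexSet] using hj,
        adj_of_add_eq_or_add_eq (f := Sum.inr) (adj_inr_add hk) hjx⟩

/-- Outer `0` is dropped when `n ≡ 1 (mod 4)`: then it is dominated by outer `n - 1`, its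
neighbours outer `1` and inner `0` by inner `1` and inner `n - k`, and this pays for the
extra vertex that the class `k + 2 (mod 4)` has below `k`. -/
def domSet (n k : ℕ) [NeZero n] : Finset (ZMod n ⊕ ZMod n) :=
  vertexSet n (fun i => i % 4 = 0 ∧ (i ≠ 0 ∨ n % 4 = 3))
    (fun i => i % 4 = 2 ∨ (i % 4 = (k + 2) % 4 ∧ i < k))

lemma isDominating_domSet (hk : k % 2 = 1) (hkn : k < n) (hn : n % 4 = 3 * k % 4) :
    IsDominating (petersen n k) ↑(domSet n k) := by
  refine isDominating_vertexSet (by omega) hkn (fun i hi => ?_) (fun i hi => ?_)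
  · obtain h | h | h | h : i % 4 = 0 ∨ i % 4 = 1 ∨ i % 4 = 2 ∨ i % 4 = 3 := by omega
    · by_cases hP : i ≠ 0 ∨ n % 4 = 3
      · exact .inl ⟨h, hP⟩
      · exact .inr (.inr (.sub_wrap (by omega) ⟨by omega, .inl (by omega)⟩))
    · by_cases hP : i ≠ 1 ∨ n % 4 = 3
      · exact .inr (.inr (.sub (by omega) ⟨by omega, by omega⟩))
      · exact .inr (.inl (.inr ⟨by omega, by omega⟩))
    · exact .inr (.inl (.inl h))
    · exact .inr (.inr (.add (by omega) ⟨by omega, .inl (by omega)⟩))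
  · obtain h | h | h | h : i % 4 = 0 ∨ i % 4 = 2 ∨ i % 4 = (k + 2) % 4 ∨ i % 4 = k % 4 := by
      omega
    · by_cases h0 : i = 0
      · exact .inr (.inr (.sub_wrap (by omega) (.inl (by omega))))
      · exact .inr (.inl ⟨h, .inl h0⟩)
    · exact .inl (.inl h)
    · by_cases hik : i < k
      · exact .inl (.inr ⟨h, hik⟩)
      · exact .inr (.inr (.sub (by omega) (.inl (by omega))))
    · by_cases hin : i + k < n
      · exact .inr (.inr (.add hin (.inl (by omega))))
      · exact .inr (.inr (.add_wrap (by omega) (.inr ⟨by omega, by omega⟩)))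

lemma card_domSet (hk : k % 2 = 1) (hkn : k < n) (hn : n % 4 = 3 * k % 4) :
    #(domSet n k) ≤ n / 2 + k / 4 + 1 := by
  have hP : #{i ∈ range n | i % 4 = 0 ∧ (i ≠ 0 ∨ n % 4 = 3)} = (n + 1) / 4 :=
    card_filter_range_eq_of_succ (f := fun m => (m + 3) / 4 - if n % 4 = 3 then 0 else min m 1)
      (by split_ifs <;> rfl) (fun m => by split_ifs <;> omega) n |>.trans (by split_ifs <;> omega)
  have hQ : #{i ∈ range n | i % 4 = 2 ∨ (i % 4 = (k + 2) % 4 ∧ i < k)} =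
      (n + 1) / 4 + (k + 3 - (k + 2) % 4) / 4 :=
    card_filter_range_eq_of_succ (f := fun m => (m + 1) / 4 + (min m k + 3 - (k + 2) % 4) / 4)
      (by omega) (fun m => by split_ifs <;> omega) n |>.trans (by omega)
  rw [domSet, card_vertexSet, hP, hQ]
  obtain h | h : k % 4 = 1 ∨ k % 4 = 3 := by omega
  all_goals omega

end VertexSet

theorem gamma_le_of_odd (hk : k % 2 = 1) (hkn : k < n) (hn : n % 4 = 3 * k % 4) :
    gamma (petersen n k) ≤ n / 2 + k / 4 + 1 := by
  have : NeZero n := ⟨by omega⟩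
  exact (gamma_le_card (isDominating_domSet hk hkn hn)).trans (card_domSet hk hkn hn)

end Petersen

theorem petersen_upper_c3mod4_kodd_general (c k : ℕ) (hc4 : c % 4 = 3) (hkodd : k % 2 = 1) :
    gamma (petersen (c * k) k) ≤ c * k / 2 + k / 4 + 1 :=
  Petersen.gamma_le_of_odd hkodd (lt_mul_of_one_lt_left (by omega) (by omega))
    (by rw [Nat.mul_mod, hc4]; omega)

theorem petersen_upper_c3mod4_kodd (c k : ℕ) (hc : 3 ≤ c) (hc4 : c % 4 = 3)
    (hk : 3 ≤ k) (hkodd : k % 2 = 1) :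
    gamma (petersen (c * k) k) ≤ c * k / 2 + k / 4 + 1 :=
  petersen_upper_c3mod4_kodd_general c k hc4 hkodd
end

section
/- For every even k ≥ 2, the domination number of the generalized Petersen graph P(4k,k) equals 2k+1. -/
open SimpleGraph

/-!
`P(4k, k)` is cubic on `8k` vertices, so a dominating set of size `2k` would be perfect: every
closed neighbourhood meets it exactly once. For the indicators `f`, `g` of its outer and inner
parts, counting shows that every coset `x + ⟨k⟩` carries exactly one inner vertex, and then
`f x = g (x + 2k)`. Now an outer vertex `x` forces exactly one of `x + 1 ± k`, and the direction
`d = 1 ± k` taken persists: `f x = f (x + d) = 1` gives `f (x + 2d) = 1`. As `d` is a unit of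
`ℤ/4k` for even `k`, `f` would be `1` everywhere, which is absurd.

Conversely, let `q = 1 + e` be the inverse of `1 + k`, where `e = ±k` according to `k mod 4`.
Writing each index as `s q - t e` with `s < k`, `t < 4`, one checks that the outer vertices `m q`,
`m ≤ k`, and the inner vertices `m q + 2k`, `m < k`, dominate.
-/

open Finset

theorem gamma_eq_of_isDominating {V : Type*} {G : SimpleGraph V} {S : Finset V} {m : ℕ}
    (hS : IsDominating G S) (hcard : #S = m)
    (hmin : ∀ T : Finset V, IsDominating G T → m ≤ #T) : gamma G = m :=
  le_antisymm (Nat.sInf_le ⟨S, hS, hcard⟩)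
    (le_csInf ⟨m, S, hS, hcard⟩ (by rintro _ ⟨T, hT, rfl⟩; exact hmin T hT))

theorem Finset.card_inter_eq_sum_ite {α : Type*} [DecidableEq α] (A S : Finset α) :
    #(A ∩ S) = ∑ a ∈ A, if a ∈ S then 1 else 0 := by
  rw [← filter_mem_eq_inter, card_filter]

/-- Double counting: the closed neighbourhoods of the points of `S` have total size
`(d + 1) * #S` and cover every vertex. -/
theorem IsDominating.card_closedNbhd_inter_eq_one {V : Type*} [Fintype V] [DecidableEq V]
    {G : SimpleGraph V} [DecidableRel G.Adj] {d : ℕ} (hG : G.IsRegularOfDegree d)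
    {S : Finset V} (hS : IsDominating G S) (hcard : (d + 1) * #S ≤ Fintype.card V) (v : V) :
    #(insert v (G.neighborFinset v) ∩ S) = 1 := by
  have hpos : ∀ v, 1 ≤ #(insert v (G.neighborFinset v) ∩ S) := by
    intro v
    rw [one_le_card]
    rcases hS v with hv | ⟨u, hu, huv⟩
    · exact ⟨v, mem_inter.2 ⟨mem_insert_self _ _, hv⟩⟩
    · exact ⟨u, mem_inter.2 ⟨mem_insert_of_mem ((mem_neighborFinset ..).2 huv.symm), hu⟩⟩
  have hsum : ∑ v, #(insert v (G.neighborFinset v) ∩ S) = (d + 1) * #S := by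
    have hcol : ∀ s, #{v | s ∈ insert v (G.neighborFinset v)} = d + 1 := by
      intro s
      have : ({v | s ∈ insert v (G.neighborFinset v)} : Finset V) =
          insert s (G.neighborFinset s) := by
        ext v
        simp only [mem_filter, mem_univ, true_and, mem_insert, mem_neighborFinset, eq_comm,
          G.adj_comm]
      rw [this, card_insert_of_notMem (G.notMem_neighborFinset_self _),
        card_neighborFinset_eq_degree, hG.degree_eq]
    simp_rw [inter_comm _ S, card_inter_eq_sum_ite]
    rw [sum_comm]
    simp_rw [← card_filter, hcol, sum_const, smul_eq_mul, mul_comm]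
  have heq : ∑ _v : V, 1 = ∑ v, #(insert v (G.neighborFinset v) ∩ S) :=
    le_antisymm (sum_le_sum fun v _ => hpos v)
      (by rw [hsum, sum_const, smul_eq_mul, mul_one, card_univ]; exact hcard)
  exact ((sum_eq_sum_iff_of_le fun v _ => hpos v).1 heq v (mem_univ v)).symm

theorem sum_comp_add_right {G M : Type*} [AddGroup G] [Fintype G] [AddCommMonoid M] (h : G → M)
    (c : G) : ∑ x, h (x + c) = ∑ x, h x :=
  Fintype.sum_equiv (Equiv.addRight c) _ _ fun _ => rfl

theorem sum_sub_add_self_add_add {G : Type*} [AddGroup G] [Fintype G] (h : G → ℕ) (c : G) :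
    ∑ x, (h (x - c) + h x + h (x + c)) = 3 * ∑ x, h x := by
  simp only [sub_eq_add_neg, sum_add_distrib, sum_comp_add_right]
  ring

theorem ZMod.forall_of_add_unit {n : ℕ} [NeZero n] {P : ZMod n → Prop} {d : ZMod n}
    (hd : IsUnit d) (hP : ∀ x, P x → P (x + d)) {x₀ : ZMod n} (h₀ : P x₀) (y : ZMod n) :
    P y := by
  have hmul : ∀ m : ℕ, P (x₀ + m * d) := by
    intro m
    induction m with
    | zero => simpa using h₀
    | succ m ih => simpa [add_mul, add_assoc] using hP _ ih
  obtain ⟨u, rfl⟩ := hd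
  simpa [mul_assoc] using hmul ((y - x₀) * ↑u⁻¹).val

theorem ZMod.natCast_ne_zero_of_pos_of_lt {a n : ℕ} (ha : 0 < a) (han : a < n) :
    (a : ZMod n) ≠ 0 := by
  rw [Ne, ZMod.natCast_eq_zero_iff]
  exact Nat.not_dvd_of_pos_of_lt ha han

theorem ZMod.exists_eq_natCast_add_mul {a b : ℕ} [NeZero (a * b)] (y : ZMod (a * b)) :
    ∃ s < b, ∃ t < a, y = s + b * t := by
  have hb : 0 < b := Nat.pos_of_ne_zero (right_ne_zero_of_mul (NeZero.ne (a * b)))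
  refine ⟨y.val % b, Nat.mod_lt _ hb, y.val / b,
    Nat.div_lt_of_lt_mul ((ZMod.val_lt y).trans_eq (mul_comm a b)), ?_⟩
  conv_lhs => rw [← ZMod.natCast_zmod_val y, ← Nat.mod_add_div y.val b]
  push_cast
  ring

theorem ZMod.natCast_mul_injOn {n : ℕ} {u : ZMod n} (hu : IsUnit u) :
    Set.InjOn (fun m : ℕ => (m : ZMod n) * u) (Set.Iio n) := by
  intro a ha b hb h
  have := hu.mul_left_injective h
  rw [ZMod.natCast_eq_natCast_iff', Nat.mod_eq_of_lt ha, Nat.mod_eq_of_lt hb] at this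
  exact this

theorem ne_and_eq_add_or_iff {G : Type*} [AddGroup G] {a b c : G} (hc : c ≠ 0) :
    a ≠ b ∧ (b = a + c ∨ a = b + c) ↔ b = a + c ∨ a = b + c :=
  and_iff_right_of_imp fun h hab => by
    subst hab
    rcases h with h | h <;> exact hc (by simpa using h)

section Petersen

variable {n k : ℕ}

@[simp]
theorem petersen_adj_inl_inl {a b : ZMod n} :
    (petersen n k).Adj (.inl a) (.inl b) ↔ a ≠ b ∧ (b = a + 1 ∨ a = b + 1) := by
  simp [petersen]

@[simp]
theorem petersen_adj_inl_inr {a b : ZMod n} : (petersen n k).Adj (.inl a) (.inr b) ↔ b = a := by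
  simp [petersen]

@[simp]
theorem petersen_adj_inr_inl {a b : ZMod n} : (petersen n k).Adj (.inr a) (.inl b) ↔ a = b := by
  simp [petersen]

@[simp]
theorem petersen_adj_inr_inr {a b : ZMod n} :
    (petersen n k).Adj (.inr a) (.inr b) ↔ a ≠ b ∧ (b = a + k ∨ a = b + k) := by
  simp [petersen]

theorem petersen_adj_inl_inl_of_eq (h1 : (1 : ZMod n) ≠ 0) {a b : ZMod n}
    (h : b = a + 1 ∨ a = b + 1) : (petersen n k).Adj (.inl a) (.inl b) :=
  petersen_adj_inl_inl.2 ((ne_and_eq_add_or_iff h1).2 h)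

theorem petersen_adj_inr_inr_of_eq (hk : (k : ZMod n) ≠ 0) {e : ZMod n} (he : e = k ∨ e = -k)
    {a b : ZMod n} (h : b = a + e ∨ a = b + e) : (petersen n k).Adj (.inr a) (.inr b) := by
  rw [petersen_adj_inr_inr, ne_and_eq_add_or_iff hk]
  rcases he with rfl | rfl
  · exact h
  · rcases h with h | h
    exacts [Or.inr (by rw [h]; ring), Or.inl (by rw [h]; ring)]

variable [NeZero n] [DecidableRel (petersen n k).Adj]

theorem petersen_neighborFinset_inl (h1 : (1 : ZMod n) ≠ 0) (x : ZMod n) :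
    (petersen n k).neighborFinset (.inl x) = {.inl (x + 1), .inl (x - 1), .inr x} := by
  ext (b | b) <;> simp [eq_sub_iff_add_eq, ne_and_eq_add_or_iff h1, eq_comm (b := x)]

theorem petersen_neighborFinset_inr (hk : (k : ZMod n) ≠ 0) (x : ZMod n) :
    (petersen n k).neighborFinset (.inr x) = {.inr (x + k), .inr (x - k), .inl x} := by
  ext (b | b) <;> simp [eq_sub_iff_add_eq, ne_and_eq_add_or_iff hk, eq_comm]

theorem petersen_isRegularOfDegree (h2 : (2 : ZMod n) ≠ 0) (h2k : (2 * k : ZMod n) ≠ 0) :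
    (petersen n k).IsRegularOfDegree 3 := by
  have h1 : (1 : ZMod n) ≠ 0 := fun h => h2 (by linear_combination 2 * h)
  have hk : (k : ZMod n) ≠ 0 := fun h => h2k (by rw [h, mul_zero])
  rintro (x | x)
  · rw [degree, petersen_neighborFinset_inl h1]
    have : x + 1 ≠ x - 1 := fun h => h2 (by linear_combination h)
    simp [this]
  · rw [degree, petersen_neighborFinset_inr hk]
    have : x + k ≠ x - k := fun h => h2k (by linear_combination h)
    simp [this]

theorem petersen_card_closedNbhd_inl_inter (h2 : (2 : ZMod n) ≠ 0)
    (S : Finset (ZMod n ⊕ ZMod n)) (x : ZMod n) :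
    #(insert (.inl x) ((petersen n k).neighborFinset (.inl x)) ∩ S) =
      (if .inl (x - 1) ∈ S then 1 else 0) + (if .inl x ∈ S then 1 else 0) +
        (if .inl (x + 1) ∈ S then 1 else 0) + (if .inr x ∈ S then 1 else 0) := by
  have h1 : (1 : ZMod n) ≠ 0 := fun h => h2 (by linear_combination 2 * h)
  have h₁ : x ≠ x + 1 := fun h => h1 (by linear_combination -h)
  have h₂ : x ≠ x - 1 := fun h => h1 (by linear_combination h)
  have h₃ : x + 1 ≠ x - 1 := fun h => h2 (by linear_combination h)
  rw [petersen_neighborFinset_inl h1, card_inter_eq_sum_ite, sum_insert (by simp [h₁, h₂]),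
    sum_insert (by simp [h₃]), sum_insert (by simp), sum_singleton]
  ring

theorem petersen_card_closedNbhd_inr_inter (h2k : (2 * k : ZMod n) ≠ 0)
    (S : Finset (ZMod n ⊕ ZMod n)) (x : ZMod n) :
    #(insert (.inr x) ((petersen n k).neighborFinset (.inr x)) ∩ S) =
      (if .inr (x - k) ∈ S then 1 else 0) + (if .inr x ∈ S then 1 else 0) +
        (if .inr (x + k) ∈ S then 1 else 0) + (if .inl x ∈ S then 1 else 0) := by
  have hk : (k : ZMod n) ≠ 0 := fun h => h2k (by rw [h, mul_zero])
  have h₁ : x ≠ x + k := fun h => hk (by linear_combination -h)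
  have h₂ : x ≠ x - k := fun h => hk (by linear_combination h)
  have h₃ : x + k ≠ x - k := fun h => h2k (by linear_combination h)
  rw [petersen_neighborFinset_inr hk, card_inter_eq_sum_ite, sum_insert (by simp [h₁, h₂]),
    sum_insert (by simp [h₃]), sum_insert (by simp), sum_singleton]
  ring

end Petersen

theorem four_mul_natCast_eq_zero (k : ℕ) : (4 * k : ZMod (4 * k)) = 0 := by
  exact_mod_cast ZMod.natCast_self (4 * k)

theorem natCast_isNilpotent_of_even {k : ℕ} (hk : Even k) : IsNilpotent (k : ZMod (4 * k)) := by
  obtain ⟨m, hm⟩ := hk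
  refine ⟨3, ?_⟩
  have : ((k ^ 3 : ℕ) : ZMod (4 * k)) = 0 :=
    (ZMod.natCast_eq_zero_iff _ _).2 ⟨m * m, by rw [hm]; ring⟩
  exact_mod_cast this

theorem exists_inv_one_add_natCast {k : ℕ} (hk : Even k) :
    ∃ e : ZMod (4 * k), (e = k ∨ e = -k) ∧ (k + 1) * (1 + e) = 1 := by
  obtain ⟨m, hm⟩ := hk
  rcases Nat.even_or_odd m with ⟨c, hc⟩ | ⟨c, hc⟩
  · have h : ((k * k : ℕ) : ZMod (4 * k)) = 0 :=
      (ZMod.natCast_eq_zero_iff _ _).2 ⟨c, by subst hm hc; ring⟩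
    push_cast at h
    exact ⟨-k, Or.inr rfl, by linear_combination -h⟩
  · have h : ((k * (k + 2) : ℕ) : ZMod (4 * k)) = 0 :=
      (ZMod.natCast_eq_zero_iff _ _).2 ⟨c + 1, by subst hm hc; ring⟩
    push_cast at h
    exact ⟨k, Or.inl rfl, by linear_combination h⟩

section OuterInner

variable {k : ℕ} [NeZero k] {f g : ZMod (4 * k) → ℕ}

theorem sum_inner_eq (hO : ∀ x, f (x - 1) + f x + f (x + 1) + g x = 1)
    (hI : ∀ x, g (x - k) + g x + g (x + k) + f x = 1) : ∑ x, g x = k := by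
  have hcard : ∑ _x : ZMod (4 * k), 1 = 4 * k := by simp
  have hO' : 3 * ∑ x, f x + ∑ x, g x = 4 * k := by
    rw [← sum_sub_add_self_add_add f 1, ← sum_add_distrib]
    exact (sum_congr rfl fun x _ => hO x).trans hcard
  have hI' : 3 * ∑ x, g x + ∑ x, f x = 4 * k := by
    rw [← sum_sub_add_self_add_add g k, ← sum_add_distrib]
    exact (sum_congr rfl fun x _ => hI x).trans hcard
  omega

theorem inner_coset_sum_eq_one (hO : ∀ x, f (x - 1) + f x + f (x + 1) + g x = 1)
    (hI : ∀ x, g (x - k) + g x + g (x + k) + f x = 1) (x : ZMod (4 * k)) :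
    g x + g (x + k) + g (x + 2 * k) + g (x + 3 * k) = 1 := by
  have h4 := four_mul_natCast_eq_zero k
  have hle : ∀ x, g x + g (x + k) + g (x + 2 * k) + g (x + 3 * k) ≤ 1 := by
    intro x
    have h₁ := hI (x + k)
    have h₂ := hI (x + 2 * k)
    have h₃ := hI (x + 3 * k)
    rw [add_sub_cancel_right, show x + k + k = x + 2 * k by ring] at h₁
    rw [show x + 2 * k - k = x + k by ring, show x + 2 * k + k = x + 3 * k by ring] at h₂
    rw [show x + 3 * k - k = x + 2 * k by ring, show x + 3 * k + k = x by linear_combination h4]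
      at h₃
    omega
  have hsum :
      ∑ x, (g x + g (x + k) + g (x + 2 * k) + g (x + 3 * k)) = ∑ _x : ZMod (4 * k), 1 := by
    simp [sum_add_distrib, sum_comp_add_right, sum_inner_eq hO hI]
    ring
  exact (sum_eq_sum_iff_of_le fun x _ => hle x).1 hsum x (mem_univ x)

theorem outer_eq_inner_add (hO : ∀ x, f (x - 1) + f x + f (x + 1) + g x = 1)
    (hI : ∀ x, g (x - k) + g x + g (x + k) + f x = 1) (x : ZMod (4 * k)) :
    f x = g (x + 2 * k) := by
  have h₁ := hI x
  have h₂ := inner_coset_sum_eq_one hO hI (x - k)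
  rw [sub_add_cancel, show x - k + 2 * k = x + k by ring,
    show x - k + 3 * k = x + 2 * k by ring] at h₂
  omega

theorem outer_equation (hO : ∀ x, f (x - 1) + f x + f (x + 1) + g x = 1)
    (hI : ∀ x, g (x - k) + g x + g (x + k) + f x = 1) (x : ZMod (4 * k)) :
    f (x - 1) + f x + f (x + 1) + f (x + 2 * k) = 1 := by
  have h := outer_eq_inner_add hO hI (x + 2 * k)
  rw [show x + 2 * k + 2 * k = x by linear_combination four_mul_natCast_eq_zero k] at h
  rw [h]
  exact hO x

theorem outer_coset_sum_eq_one (hO : ∀ x, f (x - 1) + f x + f (x + 1) + g x = 1)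
    (hI : ∀ x, g (x - k) + g x + g (x + k) + f x = 1) (x : ZMod (4 * k)) :
    f x + f (x + k) + f (x + 2 * k) + f (x + 3 * k) = 1 := by
  have h4 := four_mul_natCast_eq_zero k
  have h₀ := outer_eq_inner_add hO hI x
  have h₁ := outer_eq_inner_add hO hI (x + k)
  have h₂ := outer_eq_inner_add hO hI (x + 2 * k)
  have h₃ := outer_eq_inner_add hO hI (x + 3 * k)
  rw [show x + k + 2 * k = x + 3 * k by ring] at h₁
  rw [show x + 2 * k + 2 * k = x by linear_combination h4] at h₂
  rw [show x + 3 * k + 2 * k = x + k by linear_combination h4] at h₃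
  have := inner_coset_sum_eq_one hO hI x
  omega

end OuterInner

section Outer

variable {k : ℕ} {f : ZMod (4 * k) → ℕ}

theorem outer_add_two_eq_zero (hE : ∀ x, f (x - 1) + f x + f (x + 1) + f (x + 2 * k) = 1)
    {x : ZMod (4 * k)} (hx : f x = 1) : f (x + 2) = 0 := by
  have h := hE (x + 1)
  rw [add_sub_cancel_right, show x + 1 + 1 = x + 2 by ring] at h
  omega

theorem outer_step (hE : ∀ x, f (x - 1) + f x + f (x + 1) + f (x + 2 * k) = 1)
    (hC : ∀ x, f x + f (x + k) + f (x + 2 * k) + f (x + 3 * k) = 1)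
    {e : ZMod (4 * k)} (he : e = k ∨ e = -k) {x : ZMod (4 * k)} (hx : f x = 1) :
    f (x + (1 + e)) + f (x + (1 - e)) = 1 := by
  suffices f (x + (1 + k)) + f (x + (1 - k)) = 1 by
    rcases he with rfl | rfl
    · exact this
    · rw [← sub_eq_add_neg, sub_neg_eq_add]
      omega
  have h4 := four_mul_natCast_eq_zero k
  have hc := hC (x + 1)
  have h₁ := hE x
  have h₂ := hE (x + 2 * k)
  rw [show x + 1 + k = x + (1 + k) by ring,
    show x + 1 + 3 * k = x + (1 - k) by linear_combination h4] at hc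
  rw [show x + 2 * k + 1 = x + 1 + 2 * k by ring,
    show x + 2 * k + 2 * k = x by linear_combination h4] at h₂
  omega

theorem outer_propagate (hE : ∀ x, f (x - 1) + f x + f (x + 1) + f (x + 2 * k) = 1)
    (hC : ∀ x, f x + f (x + k) + f (x + 2 * k) + f (x + 3 * k) = 1)
    {e : ZMod (4 * k)} (he : e = k ∨ e = -k) {x : ZMod (4 * k)} (hx : f x = 1)
    (hxe : f (x + (1 + e)) = 1) : f (x + (1 + e) + (1 + e)) = 1 := by
  have h := outer_step hE hC he hxe
  rw [show x + (1 + e) + (1 - e) = x + 2 by ring, outer_add_two_eq_zero hE hx] at h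
  omega

theorem not_outer_equations [NeZero k] (hk : Even k)
    (hE : ∀ x, f (x - 1) + f x + f (x + 1) + f (x + 2 * k) = 1)
    (hC : ∀ x, f x + f (x + k) + f (x + 2 * k) + f (x + 3 * k) = 1) : False := by
  obtain ⟨x₀, hx₀⟩ : ∃ x, f x = 1 := by
    by_contra! h
    have := hC 0
    have := h 0
    have := h (0 + k)
    have := h (0 + 2 * k)
    have := h (0 + 3 * k)
    omega
  obtain ⟨e, he, hx₀e⟩ :
      ∃ e : ZMod (4 * k), (e = k ∨ e = -k) ∧ f (x₀ + (1 + e)) = 1 := by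
    have h := outer_step hE hC (Or.inl rfl) hx₀
    by_cases h₁ : f (x₀ + (1 + k)) = 1
    · exact ⟨k, Or.inl rfl, h₁⟩
    · exact ⟨-k, Or.inr rfl, by rw [← sub_eq_add_neg]; omega⟩
  have hunit : IsUnit (1 + e) := by
    rcases he with rfl | rfl
    exacts [(natCast_isNilpotent_of_even hk).isUnit_one_add,
      (natCast_isNilpotent_of_even hk).neg.isUnit_one_add]
  -- `1 + e` is a unit, so the pattern spreads around the whole cycle, even to `x₀ + 1`.
  have h := ZMod.forall_of_add_unit (P := fun x => f x = 1 ∧ f (x + (1 + e)) = 1) hunit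
    (fun x hx => ⟨hx.2, outer_propagate hE hC he hx.1 hx.2⟩) ⟨hx₀, hx₀e⟩ (x₀ + 1)
  have := hE x₀
  omega

end Outer

theorem petersen_two_mul_add_one_le_card_of_isDominating {k : ℕ} [NeZero k] (hk : Even k)
    {S : Finset (ZMod (4 * k) ⊕ ZMod (4 * k))} (hS : IsDominating (petersen (4 * k) k) S) :
    2 * k + 1 ≤ #S := by
  classical
  by_contra! hlt
  have hk0 := NeZero.pos k
  have h2 : (2 : ZMod (4 * k)) ≠ 0 := by
    exact_mod_cast ZMod.natCast_ne_zero_of_pos_of_lt (a := 2) two_pos (by omega)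
  have h2k : (2 * k : ZMod (4 * k)) ≠ 0 := by
    exact_mod_cast ZMod.natCast_ne_zero_of_pos_of_lt (a := 2 * k) (by omega) (by omega)
  have hperfect := hS.card_closedNbhd_inter_eq_one (petersen_isRegularOfDegree h2 h2k)
    (by simp only [Fintype.card_sum, ZMod.card]; omega)
  let f : ZMod (4 * k) → ℕ := fun x => if .inl x ∈ S then 1 else 0
  let g : ZMod (4 * k) → ℕ := fun x => if .inr x ∈ S then 1 else 0
  have hO : ∀ x, f (x - 1) + f x + f (x + 1) + g x = 1 := fun x =>
    (petersen_card_closedNbhd_inl_inter h2 S x).symm.trans (hperfect _)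
  have hI : ∀ x, g (x - k) + g x + g (x + k) + f x = 1 := fun x =>
    (petersen_card_closedNbhd_inr_inter h2k S x).symm.trans (hperfect _)
  exact not_outer_equations hk (outer_equation hO hI) (outer_coset_sum_eq_one hO hI)

def petersenDominatingSet (k : ℕ) (e : ZMod (4 * k)) : Finset (ZMod (4 * k) ⊕ ZMod (4 * k)) :=
  (range (k + 1)).image (fun m : ℕ => .inl (m * (1 + e))) ∪
    (range k).image (fun m : ℕ => .inr (m * (1 + e) + 2 * k))

section DominatingSet

variable {k : ℕ} [NeZero k] {e : ZMod (4 * k)}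

theorem card_petersenDominatingSet (hinv : (k + 1) * (1 + e) = 1) :
    #(petersenDominatingSet k e) = 2 * k + 1 := by
  have hinj : ∀ n ≤ 4 * k, Set.InjOn (fun m : ℕ => (m : ZMod (4 * k)) * (1 + e)) (range n) :=
    fun n hn => (ZMod.natCast_mul_injOn (IsUnit.of_mul_eq_one_right _ hinv)).mono
      (by rw [coe_range]; exact Set.Iio_subset_Iio hn)
  have hk := NeZero.pos k
  rw [petersenDominatingSet, card_union_of_disjoint (disjoint_left.2 (by simp)),
    card_image_of_injOn, card_image_of_injOn, card_range, card_range]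
  · ring
  · exact (Sum.inr_injective.comp (add_left_injective _)).comp_injOn (hinj k (by omega))
  · exact Sum.inl_injective.comp_injOn (hinj (k + 1) (by omega))

theorem exists_eq_natCast_mul_one_add_sub (hinv : (k + 1) * (1 + e) = 1) (x : ZMod (4 * k)) :
    ∃ s < k, ∃ t < (4 : ℕ), x = s * (1 + e) - t * e := by
  obtain ⟨s, hs, t, ht, hy⟩ := ZMod.exists_eq_natCast_add_mul ((k + 1 : ZMod (4 * k)) * x)
  exact ⟨s, hs, t, ht, by linear_combination (1 + e) * hy + (t - x) * hinv⟩

theorem isDominating_petersenDominatingSet (he : e = k ∨ e = -k)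
    (hinv : (k + 1) * (1 + e) = 1) :
    IsDominating (petersen (4 * k) k) (petersenDominatingSet k e) := by
  have hk := NeZero.pos k
  have h4 := four_mul_natCast_eq_zero k
  have h1 : (1 : ZMod (4 * k)) ≠ 0 := by
    exact_mod_cast ZMod.natCast_ne_zero_of_pos_of_lt (a := 1) one_pos (by omega)
  have hk0 : (k : ZMod (4 * k)) ≠ 0 := ZMod.natCast_ne_zero_of_pos_of_lt hk (by omega)
  have h2e : 2 * e + 2 * k = 0 := by
    rcases he with rfl | rfl
    · linear_combination h4
    · ring
  have mem_inl : ∀ m ≤ k, ∀ y, y = m * (1 + e) →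
      (.inl y : ZMod (4 * k) ⊕ ZMod (4 * k)) ∈ (petersenDominatingSet k e : Set _) := by
    rintro m hm _ rfl
    exact mem_union_left _ (mem_image_of_mem _ (mem_range.2 (Nat.lt_succ_of_le hm)))
  have mem_inr : ∀ m < k, ∀ y, y = m * (1 + e) + 2 * k →
      (.inr y : ZMod (4 * k) ⊕ ZMod (4 * k)) ∈ (petersenDominatingSet k e : Set _) := by
    rintro m hm _ rfl
    exact mem_union_right _ (mem_image_of_mem _ (mem_range.2 hm))
  rintro (x | x) <;> obtain ⟨s, hs, t, ht, hx⟩ := exists_eq_natCast_mul_one_add_sub hinv x <;>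
    interval_cases t <;> push_cast at hx
  -- the goals: outer vertex for `t = 0, 1, 2, 3`, then inner vertex for `t = 0, 1, 2, 3`
  · exact .inl (mem_inl s hs.le x (by linear_combination hx))
  · rcases s with _ | s
    · exact .inl (mem_inl k le_rfl x (by linear_combination hx - hinv))
    · refine .inr ⟨_, mem_inl s (by omega) _ rfl, petersen_adj_inl_inl_of_eq h1 (.inl ?_)⟩
      push_cast at hx
      linear_combination hx
  · exact .inr ⟨_, mem_inr s hs x (by linear_combination hx - h2e), petersen_adj_inr_inl.2 rfl⟩
  · refine .inr ⟨_, mem_inl (s + 1) hs _ rfl, petersen_adj_inl_inl_of_eq h1 (.inr ?_)⟩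
    push_cast
    linear_combination -hx + 2 * h2e - h4
  · exact .inr ⟨_, mem_inl s hs.le x (by linear_combination hx), petersen_adj_inl_inr.2 rfl⟩
  · refine .inr ⟨_, mem_inr s hs _ rfl, petersen_adj_inr_inr_of_eq hk0 he (.inl ?_)⟩
    linear_combination hx - h2e
  · exact .inl (mem_inr s hs x (by linear_combination hx - h2e))
  · refine .inr ⟨_, mem_inr s hs _ rfl, petersen_adj_inr_inr_of_eq hk0 he (.inr ?_)⟩
    linear_combination -hx + h2e

end DominatingSet

theorem gamma_P4k_even (k : ℕ) (hk : 2 ≤ k) (hkeven : k % 2 = 0) :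
    gamma (petersen (4 * k) k) = 2 * k + 1 := by
  have : NeZero k := ⟨by omega⟩
  have hk' : Even k := Nat.even_iff.2 hkeven
  obtain ⟨e, he, hinv⟩ := exists_inv_one_add_natCast hk'
  exact gamma_eq_of_isDominating (isDominating_petersenDominatingSet he hinv)
    (card_petersenDominatingSet hinv)
    fun _ hT => petersen_two_mul_add_one_le_card_of_isDominating hk' hT
end
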